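/- arXiv:math/0612488 — 2 statements merged into one kernel-verified Lean document; each statement's English description precedes it below -/
import Mathlib

section
/- Suppose ε < 1/2 and log(ε_n − ε_{n−1}) = o(n) as n → ∞. Then sup over p ∈ [0,α] of P_p(τ < ∞, S_τ ≥ U_τ) is at most ε, and sup over p ∈ (α,1] of P_p(τ < ∞, S_τ ≤ L_τ) is at most ε. -/
/-!
Fix `n`. The event `{τ ≤ n, S_τ ≥ U_τ}` is determined by the first `n` steps, through an up-set
of step vectors. Realising Bernoulli(`p`) steps as `1{u_i ≤ p}` for i.i.d. uniform `u_i` shows that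
the probability of an up-set is nondecreasing in `p`; so for `p ≤ α` the event has at most its
`P_α`-probability, which the construction of `U` keeps below `ε_n < ε` (by induction on `n`: the
trivial boundary `n + 1` is always admissible). Letting `n → ∞` bounds `P_p(τ < ∞, S_τ ≥ U_τ)`.
The lower boundary is symmetric, with down-sets and `p ≥ α`. The condition `ε < 1/2` is what makes
`L_n` a genuine maximum: a lower boundary `j ≥ n` would charge the whole event `τ ≥ n` against
`ε_n`, forcing `1 ≤ ε_n + ε_{n-1}`.
-/

open MeasureTheory ProbabilityTheory Filter Asymptotics
open scoped ENNReal

namespace SeqMC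

variable {Ω : Type*} [MeasurableSpace Ω]

/-- Partial sums: `S n = X_1 + ⋯ + X_n`, where the i-th variable `X_i` is `X (i-1)`. -/
def S (X : ℕ → Ω → ℕ) (n : ℕ) (ω : Ω) : ℕ := ∑ i ∈ Finset.range n, X i ω

/-- `X` is an i.i.d. Bernoulli(p) sequence under the probability measure `P`. -/
structure IsBernoulliSeq (P : Measure Ω) (p : ℝ) (X : ℕ → Ω → ℕ) : Prop where
  isProb : IsProbabilityMeasure P
  meas : ∀ i, Measurable (X i)
  bdd : ∀ i ω, X i ω ≤ 1
  indep : iIndepFun X P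
  bern : ∀ i, P (X i ⁻¹' {1}) = ENNReal.ofReal p

/-- The walk stayed strictly between the boundaries at all steps `1 ≤ k ≤ n`, i.e. `τ > n`. -/
def notStopped (X : ℕ → Ω → ℕ) (U L : ℕ → ℤ) (n : ℕ) (ω : Ω) : Prop :=
  ∀ k, 1 ≤ k → k ≤ n → L k < (S X k ω : ℤ) ∧ (S X k ω : ℤ) < U k

/-- The event `τ ≤ n` and `S_τ ≥ U_τ`. -/
def hitUpperBy (X : ℕ → Ω → ℕ) (U L : ℕ → ℤ) (n : ℕ) (ω : Ω) : Prop :=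
  ∃ k, 1 ≤ k ∧ k ≤ n ∧ notStopped X U L (k - 1) ω ∧ U k ≤ (S X k ω : ℤ)

/-- The event `τ ≤ n` and `S_τ ≤ L_τ`. -/
def hitLowerBy (X : ℕ → Ω → ℕ) (U L : ℕ → ℤ) (n : ℕ) (ω : Ω) : Prop :=
  ∃ k, 1 ≤ k ∧ k ≤ n ∧ notStopped X U L (k - 1) ω ∧ (S X k ω : ℤ) ≤ L k

/-- The recursively defined boundaries `(U_n, L_n)`: `U_1 = 2`, `L_1 = -1` and for `n ≥ 2`,
`U_n` is the least `j ∈ {1,2,…}` with `P_α(τ ≥ n, S_n ≥ j) + P_α(τ < n, S_τ ≥ U_τ) ≤ ε_n`,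
`L_n` is the greatest `j ∈ ℤ` with `P_α(τ ≥ n, S_n ≤ j) + P_α(τ < n, S_τ ≤ L_τ) ≤ ε_n`.
Here `Pα` is the measure `P_α` and `εs` the spending sequence. -/
noncomputable def bnd (Pα : Measure Ω) (X : ℕ → Ω → ℕ) (εs : ℕ → ℝ) : ℕ → ℤ × ℤ
  | 0 => (2, -1)
  | 1 => (2, -1)
  | n + 2 =>
      let U : ℕ → ℤ := fun k => if h : k < n + 2 then (bnd Pα X εs k).1 else 0
      let L : ℕ → ℤ := fun k => if h : k < n + 2 then (bnd Pα X εs k).2 else 0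
      (sInf {j : ℤ | 1 ≤ j ∧
          Pα {ω | notStopped X U L (n + 1) ω ∧ j ≤ (S X (n + 2) ω : ℤ)} +
            Pα {ω | hitUpperBy X U L (n + 1) ω} ≤ ENNReal.ofReal (εs (n + 2))},
       sSup {j : ℤ |
          Pα {ω | notStopped X U L (n + 1) ω ∧ (S X (n + 2) ω : ℤ) ≤ j} +
            Pα {ω | hitLowerBy X U L (n + 1) ω} ≤ ENNReal.ofReal (εs (n + 2))})
  termination_by n => n
  decreasing_by all_goals omega

/-- The upper boundary `U_n`. -/
noncomputable def Ub (Pα : Measure Ω) (X : ℕ → Ω → ℕ) (εs : ℕ → ℝ) (n : ℕ) : ℤ :=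
  (bnd Pα X εs n).1

/-- The lower boundary `L_n`. -/
noncomputable def Lb (Pα : Measure Ω) (X : ℕ → Ω → ℕ) (εs : ℕ → ℝ) (n : ℕ) : ℤ :=
  (bnd Pα X εs n).2

/-- The stopping time `τ = inf {k ≥ 1 : S_k ≥ U_k or S_k ≤ L_k}`, with `0` encoding `τ = ∞`. -/
noncomputable def tau (Pα : Measure Ω) (X : ℕ → Ω → ℕ) (εs : ℕ → ℝ) (ω : Ω) : ℕ :=
  sInf {k | 1 ≤ k ∧ ((S X k ω : ℤ) ≤ Lb Pα X εs k ∨ Ub Pα X εs k ≤ (S X k ω : ℤ))}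

/-- `τ` as an extended nonneg real (`∞` when the algorithm never stops). -/
noncomputable def tauE (Pα : Measure Ω) (X : ℕ → Ω → ℕ) (εs : ℕ → ℝ) (ω : Ω) : ℝ≥0∞ :=
  if tau Pα X εs ω = 0 then ⊤ else (tau Pα X εs ω : ℝ≥0∞)

/-- The event `τ < ∞` and `S_τ ≥ U_τ`. -/
def hitsUpper (Pα : Measure Ω) (X : ℕ → Ω → ℕ) (εs : ℕ → ℝ) (ω : Ω) : Prop :=
  tau Pα X εs ω ≠ 0 ∧ Ub Pα X εs (tau Pα X εs ω) ≤ (S X (tau Pα X εs ω) ω : ℤ)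

/-- The event `τ < ∞` and `S_τ ≤ L_τ`. -/
def hitsLower (Pα : Measure Ω) (X : ℕ → Ω → ℕ) (εs : ℕ → ℝ) (ω : Ω) : Prop :=
  tau Pα X εs ω ≠ 0 ∧ (S X (tau Pα X εs ω) ω : ℤ) ≤ Lb Pα X εs (tau Pα X εs ω)

/-- The estimator `p̂ = S_τ/τ` (`= α` if `τ = ∞`). -/
noncomputable def phat (Pα : Measure Ω) (X : ℕ → Ω → ℕ) (εs : ℕ → ℝ) (α : ℝ) (ω : Ω) : ℝ :=
  if tau Pα X εs ω = 0 then α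
  else (S X (tau Pα X εs ω) ω : ℝ) / (tau Pα X εs ω)

end SeqMC

namespace SeqMC

variable {Ω : Type*}

section Paths

variable {Ω' : Type*} {X : ℕ → Ω → ℕ} {Y : ℕ → Ω' → ℕ} {U U' L L' : ℕ → ℤ}
  {n : ℕ} {ω : Ω} {ω' : Ω'}

lemma notStopped_congr (hU : ∀ k ≤ n, U k = U' k) (hL : ∀ k ≤ n, L k = L' k)
    (hS : ∀ k ≤ n, S X k ω = S Y k ω') :
    notStopped X U L n ω ↔ notStopped Y U' L' n ω' := by
  refine forall_congr' fun k => imp_congr_right fun _ => imp_congr_right fun hk => ?_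
  rw [hU k hk, hL k hk, hS k hk]

lemma hitUpperBy_mono (hU : ∀ k ≤ n, U' k ≤ U k) (hL : ∀ k ≤ n, L' k ≤ L k)
    (hS : ∀ k ≤ n, S X k ω ≤ S Y k ω') (h : hitUpperBy X U L n ω) :
    hitUpperBy Y U' L' n ω' := by
  classical
  obtain ⟨k, hk1, hkn, hns, hUk⟩ := h
  -- `Y` crosses `U'` no later than `X` crosses `U`, and until then stays above `X > L ≥ L'`
  have hex : ∃ j, 1 ≤ j ∧ j ≤ k ∧ U' j ≤ S Y j ω' :=
    ⟨k, hk1, le_rfl, by have := hU k hkn; have := hS k hkn; omega⟩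
  obtain ⟨hj1, hjk, hUj⟩ := Nat.find_spec hex
  refine ⟨Nat.find hex, hj1, hjk.trans hkn, fun i hi1 hij => ⟨?_, ?_⟩, hUj⟩
  · have := (hns i hi1 (by omega)).1; have := hL i (by omega); have := hS i (by omega); omega
  · by_contra hUi
    exact Nat.find_min hex (by omega : i < Nat.find hex) ⟨hi1, by omega, by omega⟩

lemma hitLowerBy_mono (hU : ∀ k ≤ n, U k ≤ U' k) (hL : ∀ k ≤ n, L k ≤ L' k)
    (hS : ∀ k ≤ n, S Y k ω' ≤ S X k ω) (h : hitLowerBy X U L n ω) :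
    hitLowerBy Y U' L' n ω' := by
  classical
  obtain ⟨k, hk1, hkn, hns, hLk⟩ := h
  have hex : ∃ j, 1 ≤ j ∧ j ≤ k ∧ S Y j ω' ≤ L' j :=
    ⟨k, hk1, le_rfl, by have := hL k hkn; have := hS k hkn; omega⟩
  obtain ⟨hj1, hjk, hLj⟩ := Nat.find_spec hex
  refine ⟨Nat.find hex, hj1, hjk.trans hkn, fun i hi1 hij => ⟨?_, ?_⟩, hLj⟩
  · by_contra hLi
    exact Nat.find_min hex (by omega : i < Nat.find hex) ⟨hi1, by omega, by omega⟩
  · have := (hns i hi1 (by omega)).2; have := hU i (by omega); have := hS i (by omega); omega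

lemma hitUpperBy_congr (hU : ∀ k ≤ n, U k = U' k) (hL : ∀ k ≤ n, L k = L' k)
    (hS : ∀ k ≤ n, S X k ω = S Y k ω') :
    hitUpperBy X U L n ω ↔ hitUpperBy Y U' L' n ω' :=
  ⟨hitUpperBy_mono (fun k hk => (hU k hk).ge) (fun k hk => (hL k hk).ge)
      (fun k hk => (hS k hk).le),
    hitUpperBy_mono (fun k hk => (hU k hk).le) (fun k hk => (hL k hk).le)
      (fun k hk => (hS k hk).ge)⟩

lemma hitLowerBy_congr (hU : ∀ k ≤ n, U k = U' k) (hL : ∀ k ≤ n, L k = L' k)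
    (hS : ∀ k ≤ n, S X k ω = S Y k ω') :
    hitLowerBy X U L n ω ↔ hitLowerBy Y U' L' n ω' :=
  ⟨hitLowerBy_mono (fun k hk => (hU k hk).le) (fun k hk => (hL k hk).le)
      (fun k hk => (hS k hk).ge),
    hitLowerBy_mono (fun k hk => (hU k hk).ge) (fun k hk => (hL k hk).ge)
      (fun k hk => (hS k hk).le)⟩

lemma exists_first_exit (h : ¬ notStopped X U L n ω) :
    ∃ k, 1 ≤ k ∧ k ≤ n ∧ notStopped X U L (k - 1) ω ∧
      (S X k ω ≤ L k ∨ U k ≤ S X k ω) := by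
  classical
  have hex : ∃ k, 1 ≤ k ∧ k ≤ n ∧ (S X k ω ≤ L k ∨ U k ≤ S X k ω) := by
    simp only [notStopped, not_forall] at h
    obtain ⟨k, hk1, hkn, hk⟩ := h
    exact ⟨k, hk1, hkn, by omega⟩
  obtain ⟨hk1, hkn, hk⟩ := Nat.find_spec hex
  refine ⟨Nat.find hex, hk1, hkn, fun i hi1 hik => ?_, hk⟩
  have := Nat.find_min hex (by omega : i < Nat.find hex)
  omega

lemma notStopped_or_hitUpperBy_or_hitLowerBy (U L : ℕ → ℤ) (n : ℕ) (ω : Ω) :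
    notStopped X U L n ω ∨ hitUpperBy X U L n ω ∨ hitLowerBy X U L n ω := by
  by_cases h : notStopped X U L n ω
  · exact Or.inl h
  obtain ⟨k, hk1, hkn, hns, hL | hU⟩ := exists_first_exit h
  · exact Or.inr (Or.inr ⟨k, hk1, hkn, hns, hL⟩)
  · exact Or.inr (Or.inl ⟨k, hk1, hkn, hns, hU⟩)

lemma hitUpperBy_succ (h : hitUpperBy X U L (n + 1) ω) :
    (notStopped X U L n ω ∧ U (n + 1) ≤ S X (n + 1) ω) ∨ hitUpperBy X U L n ω := by
  obtain ⟨k, hk1, hkn, hns, hUk⟩ := h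
  rcases Nat.lt_or_eq_of_le hkn with hk | rfl
  · exact Or.inr ⟨k, hk1, by omega, hns, hUk⟩
  · exact Or.inl ⟨hns, hUk⟩

lemma hitLowerBy_succ (h : hitLowerBy X U L (n + 1) ω) :
    (notStopped X U L n ω ∧ S X (n + 1) ω ≤ L (n + 1)) ∨ hitLowerBy X U L n ω := by
  obtain ⟨k, hk1, hkn, hns, hLk⟩ := h
  rcases Nat.lt_or_eq_of_le hkn with hk | rfl
  · exact Or.inr ⟨k, hk1, by omega, hns, hLk⟩
  · exact Or.inl ⟨hns, hLk⟩

lemma monotone_setOf_hitUpperBy (U L : ℕ → ℤ) :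
    Monotone fun n => {ω | hitUpperBy X U L n ω} :=
  fun _ _ hmn _ ⟨k, hk1, hkn, hns, hUk⟩ => ⟨k, hk1, hkn.trans hmn, hns, hUk⟩

lemma monotone_setOf_hitLowerBy (U L : ℕ → ℤ) :
    Monotone fun n => {ω | hitLowerBy X U L n ω} :=
  fun _ _ hmn _ ⟨k, hk1, hkn, hns, hLk⟩ => ⟨k, hk1, hkn.trans hmn, hns, hLk⟩

lemma S_le (hX : ∀ i ω, X i ω ≤ 1) (k : ℕ) (ω : Ω) : S X k ω ≤ k :=
  (Finset.sum_le_card_nsmul _ _ 1 fun i _ => hX i ω).trans (by simp)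

end Paths

def finCoord (n i : ℕ) (x : Fin n → ℕ) : ℕ := if h : i < n then x ⟨i, h⟩ else 0

lemma S_finCoord (X : ℕ → Ω → ℕ) (ω : Ω) {n k : ℕ} (hk : k ≤ n) :
    S X k ω = S (finCoord n) k (fun i : Fin n => X i ω) :=
  Finset.sum_congr rfl fun i hi => by
    rw [finCoord, dif_pos (by rw [Finset.mem_range] at hi; omega)]

lemma S_finCoord_mono {n : ℕ} {x y : Fin n → ℕ} (h : x ≤ y) (k : ℕ) :
    S (finCoord n) k x ≤ S (finCoord n) k y :=
  Finset.sum_le_sum fun i _ => by unfold finCoord; split_ifs <;> simp [h _]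

lemma setOf_hitUpperBy_eq (X : ℕ → Ω → ℕ) (U L : ℕ → ℤ) (n : ℕ) :
    {ω | hitUpperBy X U L n ω} =
      {ω | (fun i : Fin n => X i ω) ∈ {x | hitUpperBy (finCoord n) U L n x}} :=
  Set.ext fun ω =>
    hitUpperBy_congr (fun _ _ => rfl) (fun _ _ => rfl) fun _ hk => S_finCoord X ω hk

lemma setOf_hitLowerBy_eq (X : ℕ → Ω → ℕ) (U L : ℕ → ℤ) (n : ℕ) :
    {ω | hitLowerBy X U L n ω} =
      {ω | (fun i : Fin n => X i ω) ∈ {x | hitLowerBy (finCoord n) U L n x}} :=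
  Set.ext fun ω =>
    hitLowerBy_congr (fun _ _ => rfl) (fun _ _ => rfl) fun _ hk => S_finCoord X ω hk

lemma isUpperSet_hitUpperBy (U L : ℕ → ℤ) (n : ℕ) :
    IsUpperSet {x : Fin n → ℕ | hitUpperBy (finCoord n) U L n x} :=
  fun _ _ hxy => hitUpperBy_mono (fun _ _ => le_rfl) (fun _ _ => le_rfl)
    fun k _ => S_finCoord_mono hxy k

lemma isLowerSet_hitLowerBy (U L : ℕ → ℤ) (n : ℕ) :
    IsLowerSet {x : Fin n → ℕ | hitLowerBy (finCoord n) U L n x} :=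
  fun _ _ hxy => hitLowerBy_mono (fun _ _ => le_rfl) (fun _ _ => le_rfl)
    fun k _ => S_finCoord_mono hxy k
section Coupling

open Set

lemma preimage_zero_eq_compl_of_le_one {β : Type*} {f : β → ℕ} (hf : ∀ x, f x ≤ 1) :
    f ⁻¹' {0} = (f ⁻¹' {1})ᶜ := by
  ext x; have := hf x; simp only [mem_preimage, mem_singleton_iff, mem_compl_iff]; omega

lemma preimage_add_two_eq_empty_of_le_one {β : Type*} {f : β → ℕ} (hf : ∀ x, f x ≤ 1)
    (a : ℕ) : f ⁻¹' {a + 2} = ∅ := by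
  ext x; have := hf x; simp only [mem_preimage, mem_singleton_iff, mem_empty_iff_false, iff_false]
  omega

variable [MeasurableSpace Ω]

lemma map_eq_map_of_le_one {Ω' : Type*} [MeasurableSpace Ω'] {μ : Measure Ω} {ν : Measure Ω'}
    [IsProbabilityMeasure μ] [IsProbabilityMeasure ν] {f : Ω → ℕ} {g : Ω' → ℕ}
    (hf : Measurable f) (hg : Measurable g) (hf1 : ∀ ω, f ω ≤ 1) (hg1 : ∀ ω, g ω ≤ 1)
    (h : μ (f ⁻¹' {1}) = ν (g ⁻¹' {1})) : μ.map f = ν.map g := by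
  refine Measure.ext_of_singleton fun a => ?_
  rw [Measure.map_apply hf (measurableSet_singleton a),
    Measure.map_apply hg (measurableSet_singleton a)]
  rcases a with _ | _ | a
  · rw [preimage_zero_eq_compl_of_le_one hf1, preimage_zero_eq_compl_of_le_one hg1,
      prob_compl_eq_one_sub (hf (measurableSet_singleton 1)),
      prob_compl_eq_one_sub (hg (measurableSet_singleton 1)), h]
  · exact h
  · rw [preimage_add_two_eq_empty_of_le_one hf1, preimage_add_two_eq_empty_of_le_one hg1,
      measure_empty, measure_empty]

noncomputable abbrev unifIcc : Measure ℝ := volume.restrict (Icc 0 1)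

instance : IsProbabilityMeasure unifIcc := ⟨by simp⟩

lemma unifIcc_Iic {p : ℝ} (hp : p ∈ Icc (0 : ℝ) 1) : unifIcc (Iic p) = ENNReal.ofReal p := by
  rw [Measure.restrict_apply measurableSet_Iic, inter_comm, ← Ici_inter_Iic, inter_assoc,
    Iic_inter_Iic, min_eq_right hp.2, Ici_inter_Iic, Real.volume_Icc, sub_zero]

lemma indicator_Iic_mono {p q : ℝ} (hpq : p ≤ q) (u : ℝ) :
    (Iic p).indicator (1 : ℝ → ℕ) u ≤ (Iic q).indicator 1 u :=
  indicator_le_indicator_of_subset (Iic_subset_Iic.mpr hpq) (fun _ => Nat.zero_le _) u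

namespace IsBernoulliSeq

variable {P Q : Measure Ω} {p q : ℝ} {X : ℕ → Ω → ℕ}

lemma map_eq_map_indicator (hP : IsBernoulliSeq P p X) (hp : p ∈ Icc (0 : ℝ) 1) (i : ℕ) :
    P.map (X i) = unifIcc.map ((Iic p).indicator 1) := by
  have := hP.isProb
  refine map_eq_map_of_le_one (hP.meas i) (measurable_one.indicator measurableSet_Iic)
    (hP.bdd i) (fun u => ?_) ?_
  · by_cases hu : u ∈ Iic p <;> simp [hu]
  · rw [hP.bern i, ← unifIcc_Iic hp]
    congr 1
    ext u
    by_cases hu : u ∈ Iic p <;> simp [hu]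

lemma map_fin_eq_map_pi_indicator (hP : IsBernoulliSeq P p X) (hp : p ∈ Icc (0 : ℝ) 1)
    (n : ℕ) :
    P.map (fun ω (i : Fin n) => X i ω) =
      (Measure.pi fun _ : Fin n => unifIcc).map (fun u i => (Iic p).indicator 1 (u i)) := by
  have := hP.isProb
  rw [(hP.indep.precomp Fin.val_injective).map_fun_eq_pi_map
      fun i : Fin n => (hP.meas i).aemeasurable,
    Measure.pi_map_pi fun _ => (measurable_one.indicator measurableSet_Iic).aemeasurable]
  simp only [hP.map_eq_map_indicator hp]

lemma measure_fin_preimage_eq (hP : IsBernoulliSeq P p X) (hp : p ∈ Icc (0 : ℝ) 1) {n : ℕ}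
    (A : Set (Fin n → ℕ)) :
    P {ω | (fun i : Fin n => X i ω) ∈ A} =
      Measure.pi (fun _ : Fin n => unifIcc) {u | (fun i => (Iic p).indicator 1 (u i)) ∈ A} := by
  have hA : MeasurableSet A := A.to_countable.measurableSet
  change P ((fun ω (i : Fin n) => X i ω) ⁻¹' A) = _
  rw [← Measure.map_apply (measurable_pi_lambda _ fun i : Fin n => hP.meas i) hA,
    hP.map_fin_eq_map_pi_indicator hp n, Measure.map_apply _ hA]
  · rfl
  exact measurable_pi_lambda _ fun i =>
    (measurable_one.indicator measurableSet_Iic).comp (measurable_pi_apply i)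

lemma measure_fin_preimage_le_of_isUpperSet (hP : IsBernoulliSeq P p X)
    (hQ : IsBernoulliSeq Q q X) (hp : p ∈ Icc (0 : ℝ) 1) (hq : q ∈ Icc (0 : ℝ) 1)
    (hpq : p ≤ q) {n : ℕ} {A : Set (Fin n → ℕ)} (hA : IsUpperSet A) :
    P {ω | (fun i : Fin n => X i ω) ∈ A} ≤ Q {ω | (fun i : Fin n => X i ω) ∈ A} := by
  rw [hP.measure_fin_preimage_eq hp, hQ.measure_fin_preimage_eq hq]
  exact measure_mono fun u hu => hA (fun i => indicator_Iic_mono hpq (u i)) hu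

lemma measure_fin_preimage_le_of_isLowerSet (hP : IsBernoulliSeq P p X)
    (hQ : IsBernoulliSeq Q q X) (hp : p ∈ Icc (0 : ℝ) 1) (hq : q ∈ Icc (0 : ℝ) 1)
    (hpq : p ≤ q) {n : ℕ} {A : Set (Fin n → ℕ)} (hA : IsLowerSet A) :
    Q {ω | (fun i : Fin n => X i ω) ∈ A} ≤ P {ω | (fun i : Fin n => X i ω) ∈ A} := by
  rw [hP.measure_fin_preimage_eq hp, hQ.measure_fin_preimage_eq hq]
  exact measure_mono fun u hu => hA (fun i => indicator_Iic_mono hpq (u i)) hu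

end IsBernoulliSeq

end Coupling

section Boundaries

variable [MeasurableSpace Ω]

/-- `P_α(τ ≥ n + 1, S_{n+1} ≥ j) + P_α(τ ≤ n, S_τ ≥ U_τ)`, the quantity that `U_{n+1}` keeps
below `ε_{n+1}`. -/
noncomputable def upperSpent (μ : Measure Ω) (X : ℕ → Ω → ℕ) (U L : ℕ → ℤ)
    (n : ℕ) (j : ℤ) : ℝ≥0∞ :=
  μ {ω | notStopped X U L n ω ∧ j ≤ S X (n + 1) ω} + μ {ω | hitUpperBy X U L n ω}

noncomputable def lowerSpent (μ : Measure Ω) (X : ℕ → Ω → ℕ) (U L : ℕ → ℤ)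
    (n : ℕ) (j : ℤ) : ℝ≥0∞ :=
  μ {ω | notStopped X U L n ω ∧ S X (n + 1) ω ≤ j} + μ {ω | hitLowerBy X U L n ω}

variable {μ Pα : Measure Ω} {X : ℕ → Ω → ℕ} {εs : ℕ → ℝ}

lemma measure_hitUpperBy_succ_le (U L : ℕ → ℤ) (n : ℕ) :
    μ {ω | hitUpperBy X U L (n + 1) ω} ≤ upperSpent μ X U L n (U (n + 1)) :=
  (measure_mono fun _ => hitUpperBy_succ).trans (measure_union_le _ _)

lemma measure_hitLowerBy_succ_le (U L : ℕ → ℤ) (n : ℕ) :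
    μ {ω | hitLowerBy X U L (n + 1) ω} ≤ lowerSpent μ X U L n (L (n + 1)) :=
  (measure_mono fun _ => hitLowerBy_succ).trans (measure_union_le _ _)

lemma one_le_measure_notStopped_add [IsProbabilityMeasure μ] (U L : ℕ → ℤ) (n : ℕ) :
    1 ≤ μ {ω | notStopped X U L n ω} + μ {ω | hitLowerBy X U L n ω} +
      μ {ω | hitUpperBy X U L n ω} :=
  calc 1 = μ Set.univ := measure_univ.symm
    _ ≤ μ ({ω | notStopped X U L n ω} ∪ {ω | hitLowerBy X U L n ω} ∪
          {ω | hitUpperBy X U L n ω}) :=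
      measure_mono fun ω _ => by
        rcases notStopped_or_hitUpperBy_or_hitLowerBy (X := X) U L n ω with h | h | h <;> simp [h]
    _ ≤ _ := (measure_union_le _ _).trans (add_le_add_left (measure_union_le _ _) _)

lemma Ub_one : Ub Pα X εs 1 = 2 := by rw [Ub, bnd]

lemma Lb_one : Lb Pα X εs 1 = -1 := by rw [Lb, bnd]

lemma Ub_add_two (n : ℕ) :
    Ub Pα X εs (n + 2) = sInf {j : ℤ | 1 ≤ j ∧
      upperSpent Pα X (Ub Pα X εs) (Lb Pα X εs) (n + 1) j ≤
        ENNReal.ofReal (εs (n + 2))} := by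
  have hU : ∀ k ≤ n + 1, (if _ : k < n + 2 then (bnd Pα X εs k).1 else 0) = Ub Pα X εs k :=
    fun k hk => dif_pos (by omega)
  have hL : ∀ k ≤ n + 1, (if _ : k < n + 2 then (bnd Pα X εs k).2 else 0) = Lb Pα X εs k :=
    fun k hk => dif_pos (by omega)
  rw [Ub, bnd]
  simp only [upperSpent, notStopped_congr hU hL fun _ _ => rfl,
    hitUpperBy_congr hU hL fun _ _ => rfl]

lemma Lb_add_two (n : ℕ) :
    Lb Pα X εs (n + 2) = sSup {j : ℤ |
      lowerSpent Pα X (Ub Pα X εs) (Lb Pα X εs) (n + 1) j ≤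
        ENNReal.ofReal (εs (n + 2))} := by
  have hU : ∀ k ≤ n + 1, (if _ : k < n + 2 then (bnd Pα X εs k).1 else 0) = Ub Pα X εs k :=
    fun k hk => dif_pos (by omega)
  have hL : ∀ k ≤ n + 1, (if _ : k < n + 2 then (bnd Pα X εs k).2 else 0) = Lb Pα X εs k :=
    fun k hk => dif_pos (by omega)
  rw [Lb, bnd]
  simp only [lowerSpent, notStopped_congr hU hL fun _ _ => rfl,
    hitLowerBy_congr hU hL fun _ _ => rfl]

end Boundaries

section Spending

variable [MeasurableSpace Ω] {Pα : Measure Ω} {X : ℕ → Ω → ℕ} {εs : ℕ → ℝ}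

lemma ofReal_add_ofReal_lt_one {a b : ℝ} (ha : a < 1 / 2) (hb : b < 1 / 2) :
    ENNReal.ofReal a + ENNReal.ofReal b < 1 := by
  have half_lt {c : ℝ} (hc : c < 1 / 2) : ENNReal.ofReal c < ENNReal.ofReal (1 / 2) :=
    (ENNReal.ofReal_lt_ofReal_iff (by norm_num)).mpr hc
  calc ENNReal.ofReal a + ENNReal.ofReal b < ENNReal.ofReal (1 / 2) + ENNReal.ofReal (1 / 2) :=
        ENNReal.add_lt_add (half_lt ha) (half_lt hb)
    _ = 1 := by rw [← ENNReal.ofReal_add (by norm_num) (by norm_num)]; norm_num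

lemma not_hitUpperBy_of_le_one (hX : ∀ i ω, X i ω ≤ 1) {n : ℕ} (hn : n ≤ 1) (ω : Ω) :
    ¬ hitUpperBy X (Ub Pα X εs) (Lb Pα X εs) n ω := by
  rintro ⟨k, hk1, hkn, -, hU⟩
  obtain rfl : k = 1 := by omega
  have := S_le hX 1 ω
  rw [Ub_one] at hU
  omega

lemma not_hitLowerBy_of_le_one {n : ℕ} (hn : n ≤ 1) (ω : Ω) :
    ¬ hitLowerBy X (Ub Pα X εs) (Lb Pα X εs) n ω := by
  rintro ⟨k, hk1, hkn, -, hL⟩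
  obtain rfl : k = 1 := by omega
  rw [Lb_one] at hL
  omega

lemma measure_hitUpperBy_add_two_le (hX : ∀ i ω, X i ω ≤ 1) (hmono : Monotone εs) (n : ℕ)
    (ih : Pα {ω | hitUpperBy X (Ub Pα X εs) (Lb Pα X εs) (n + 1) ω} ≤
      ENNReal.ofReal (εs (n + 1))) :
    Pα {ω | hitUpperBy X (Ub Pα X εs) (Lb Pα X εs) (n + 2) ω} ≤
      ENNReal.ofReal (εs (n + 2)) := by
  -- `n + 3` is an admissible upper boundary since `S_{n+2} ≤ n + 2`
  have hmem : (n + 3 : ℤ) ∈ {j : ℤ | 1 ≤ j ∧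
      upperSpent Pα X (Ub Pα X εs) (Lb Pα X εs) (n + 1) j ≤
        ENNReal.ofReal (εs (n + 2))} := by
    refine ⟨by omega, ?_⟩
    have hempty : {ω | notStopped X (Ub Pα X εs) (Lb Pα X εs) (n + 1) ω ∧
        (n + 3 : ℤ) ≤ S X (n + 1 + 1) ω} = ∅ :=
      Set.eq_empty_of_forall_notMem fun ω hω => by
        have := S_le hX (n + 1 + 1) ω; have := hω.2; omega
    rw [upperSpent, hempty, measure_empty, zero_add]
    exact ih.trans (ENNReal.ofReal_le_ofReal (hmono (by omega)))
  have hU := Int.csInf_mem ⟨_, hmem⟩ ⟨1, fun _ hj => hj.1⟩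
  rw [← Ub_add_two] at hU
  exact (measure_hitUpperBy_succ_le _ _ (n + 1)).trans hU.2

lemma measure_hitLowerBy_add_two_le [IsProbabilityMeasure Pα] (hX : ∀ i ω, X i ω ≤ 1)
    (hmono : Monotone εs) (hhalf : ∀ n, εs n < 1 / 2) (n : ℕ)
    (ihU : Pα {ω | hitUpperBy X (Ub Pα X εs) (Lb Pα X εs) (n + 1) ω} ≤
      ENNReal.ofReal (εs (n + 1)))
    (ihL : Pα {ω | hitLowerBy X (Ub Pα X εs) (Lb Pα X εs) (n + 1) ω} ≤
      ENNReal.ofReal (εs (n + 1))) :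
    Pα {ω | hitLowerBy X (Ub Pα X εs) (Lb Pα X εs) (n + 2) ω} ≤
      ENNReal.ofReal (εs (n + 2)) := by
  -- `-1` is an admissible lower boundary since `S_{n+2} ≥ 0`
  have hmem : (-1 : ℤ) ∈ {j : ℤ |
      lowerSpent Pα X (Ub Pα X εs) (Lb Pα X εs) (n + 1) j ≤
        ENNReal.ofReal (εs (n + 2))} := by
    have hempty : {ω | notStopped X (Ub Pα X εs) (Lb Pα X εs) (n + 1) ω ∧
        S X (n + 1 + 1) ω ≤ (-1 : ℤ)} = ∅ :=
      Set.eq_empty_of_forall_notMem fun ω hω => by have := hω.2; omega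
    rw [Set.mem_ofPred_eq, lowerSpent, hempty, measure_empty, zero_add]
    exact ihL.trans (ENNReal.ofReal_le_ofReal (hmono (by omega)))
  -- a boundary `j ≥ n + 2` would charge the whole event `τ > n + 1` against `ε_{n+2}`, and the
  -- three events `τ > n + 1`, `τ ≤ n + 1` below and above would have total mass `< 1`
  have hbdd : BddAbove {j : ℤ |
      lowerSpent Pα X (Ub Pα X εs) (Lb Pα X εs) (n + 1) j ≤
        ENNReal.ofReal (εs (n + 2))} := by
    refine ⟨n + 1, fun j hj => ?_⟩
    by_contra! hjn
    have hall :
        {ω | notStopped X (Ub Pα X εs) (Lb Pα X εs) (n + 1) ω ∧ S X (n + 1 + 1) ω ≤ j} =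
          {ω | notStopped X (Ub Pα X εs) (Lb Pα X εs) (n + 1) ω} :=
      Set.ext fun ω => and_iff_left (by have := S_le hX (n + 1 + 1) ω; omega)
    rw [Set.mem_ofPred_eq, lowerSpent, hall] at hj
    exact (ofReal_add_ofReal_lt_one (hhalf _) (hhalf _)).not_ge
      ((one_le_measure_notStopped_add _ _ _).trans (add_le_add hj ihU))
  have hL := Int.csSup_mem ⟨_, hmem⟩ hbdd
  rw [← Lb_add_two] at hL
  exact (measure_hitLowerBy_succ_le _ _ (n + 1)).trans hL

lemma measure_hitUpperBy_le_and_hitLowerBy_le [IsProbabilityMeasure Pα]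
    (hX : ∀ i ω, X i ω ≤ 1) (hmono : Monotone εs) (hhalf : ∀ n, εs n < 1 / 2) :
    ∀ n, Pα {ω | hitUpperBy X (Ub Pα X εs) (Lb Pα X εs) n ω} ≤ ENNReal.ofReal (εs n) ∧
      Pα {ω | hitLowerBy X (Ub Pα X εs) (Lb Pα X εs) n ω} ≤ ENNReal.ofReal (εs n)
  | 0 => by simp [not_hitUpperBy_of_le_one hX zero_le_one, not_hitLowerBy_of_le_one zero_le_one]
  | 1 => by simp [not_hitUpperBy_of_le_one hX le_rfl, not_hitLowerBy_of_le_one le_rfl]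
  | n + 2 =>
    have ih := measure_hitUpperBy_le_and_hitLowerBy_le hX hmono hhalf (n + 1)
    ⟨measure_hitUpperBy_add_two_le hX hmono n ih.1,
      measure_hitLowerBy_add_two_le hX hmono hhalf n ih.1 ih.2⟩

end Spending

section StoppingTime

variable [MeasurableSpace Ω] {Pα : Measure Ω} {X : ℕ → Ω → ℕ} {εs : ℕ → ℝ} {ω : Ω}

lemma tau_eq_of_notStopped {k : ℕ} (hk : 1 ≤ k)
    (hns : notStopped X (Ub Pα X εs) (Lb Pα X εs) (k - 1) ω)
    (hstop : S X k ω ≤ Lb Pα X εs k ∨ Ub Pα X εs k ≤ S X k ω) :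
    tau Pα X εs ω = k :=
  IsLeast.csInf_eq ⟨⟨hk, hstop⟩, fun j ⟨hj1, hj⟩ => by
    by_contra! hjk
    have := hns j hj1 (by omega)
    omega⟩

lemma notStopped_tau_sub_one :
    notStopped X (Ub Pα X εs) (Lb Pα X εs) (tau Pα X εs ω - 1) ω := fun j hj1 hjτ => by
  have := Nat.notMem_of_lt_sInf (show j < tau Pα X εs ω by omega)
  simp only [Set.mem_ofPred_eq, not_and, not_or] at this
  have := this hj1
  omega

lemma hitsUpper_iff :
    hitsUpper Pα X εs ω ↔ ∃ n, hitUpperBy X (Ub Pα X εs) (Lb Pα X εs) n ω := by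
  constructor
  · rintro ⟨hτ, hU⟩
    exact ⟨_, _, by omega, le_rfl, notStopped_tau_sub_one, hU⟩
  · rintro ⟨n, k, hk1, -, hns, hU⟩
    rw [hitsUpper, tau_eq_of_notStopped hk1 hns (Or.inr hU)]
    exact ⟨by omega, hU⟩

lemma hitsLower_iff :
    hitsLower Pα X εs ω ↔ ∃ n, hitLowerBy X (Ub Pα X εs) (Lb Pα X εs) n ω := by
  constructor
  · rintro ⟨hτ, hL⟩
    exact ⟨_, _, by omega, le_rfl, notStopped_tau_sub_one, hL⟩
  · rintro ⟨n, k, hk1, -, hns, hL⟩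
    rw [hitsLower, tau_eq_of_notStopped hk1 hns (Or.inl hL)]
    exact ⟨by omega, hL⟩

lemma measure_hitsUpper_eq_iSup (μ : Measure Ω) :
    μ {ω | hitsUpper Pα X εs ω} =
      ⨆ n, μ {ω | hitUpperBy X (Ub Pα X εs) (Lb Pα X εs) n ω} := by
  rw [← (monotone_setOf_hitUpperBy _ _).measure_iUnion]
  congr 1
  ext ω
  simp [hitsUpper_iff]

lemma measure_hitsLower_eq_iSup (μ : Measure Ω) :
    μ {ω | hitsLower Pα X εs ω} =
      ⨆ n, μ {ω | hitLowerBy X (Ub Pα X εs) (Lb Pα X εs) n ω} := by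
  rw [← (monotone_setOf_hitLowerBy _ _).measure_iUnion]
  congr 1
  ext ω
  simp [hitsLower_iff]

end StoppingTime

section ErrorControl

open Set

variable [MeasurableSpace Ω] {P Pα : Measure Ω} {X : ℕ → Ω → ℕ} {εs : ℕ → ℝ}
  {p α ε : ℝ}

lemma measure_hitsUpper_le (hPα : IsBernoulliSeq Pα α X) (hP : IsBernoulliSeq P p X)
    (hα : α ∈ Icc (0 : ℝ) 1) (hp : p ∈ Icc 0 α) (hmono : Monotone εs)
    (hhalf : ∀ n, εs n < 1 / 2) (hε : ∀ n, εs n ≤ ε) :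
    P {ω | hitsUpper Pα X εs ω} ≤ ENNReal.ofReal ε := by
  have := hPα.isProb
  rw [measure_hitsUpper_eq_iSup]
  refine iSup_le fun n => ?_
  calc P {ω | hitUpperBy X (Ub Pα X εs) (Lb Pα X εs) n ω}
      ≤ Pα {ω | hitUpperBy X (Ub Pα X εs) (Lb Pα X εs) n ω} := by
        simp only [setOf_hitUpperBy_eq X]
        exact hP.measure_fin_preimage_le_of_isUpperSet hPα ⟨hp.1, hp.2.trans hα.2⟩ hα hp.2
          (isUpperSet_hitUpperBy _ _ n)
    _ ≤ ENNReal.ofReal (εs n) :=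
        (measure_hitUpperBy_le_and_hitLowerBy_le hPα.bdd hmono hhalf n).1
    _ ≤ ENNReal.ofReal ε := ENNReal.ofReal_le_ofReal (hε n)

lemma measure_hitsLower_le (hPα : IsBernoulliSeq Pα α X) (hP : IsBernoulliSeq P p X)
    (hα : α ∈ Icc (0 : ℝ) 1) (hp : p ∈ Icc α 1) (hmono : Monotone εs)
    (hhalf : ∀ n, εs n < 1 / 2) (hε : ∀ n, εs n ≤ ε) :
    P {ω | hitsLower Pα X εs ω} ≤ ENNReal.ofReal ε := by
  have := hPα.isProb
  rw [measure_hitsLower_eq_iSup]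
  refine iSup_le fun n => ?_
  calc P {ω | hitLowerBy X (Ub Pα X εs) (Lb Pα X εs) n ω}
      ≤ Pα {ω | hitLowerBy X (Ub Pα X εs) (Lb Pα X εs) n ω} := by
        simp only [setOf_hitLowerBy_eq X]
        exact hPα.measure_fin_preimage_le_of_isLowerSet hP hα ⟨hα.1.trans hp.1, hp.2⟩ hp.1
          (isLowerSet_hitLowerBy _ _ n)
    _ ≤ ENNReal.ofReal (εs n) :=
        (measure_hitUpperBy_le_and_hitLowerBy_le hPα.bdd hmono hhalf n).2
    _ ≤ ENNReal.ofReal ε := ENNReal.ofReal_le_ofReal (hε n)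

end ErrorControl

theorem statement_2_general {Ω : Type*} [MeasurableSpace Ω]
    (α ε : ℝ) (hα : α ∈ Set.Ioo (0:ℝ) 1)
    (εs : ℕ → ℝ) (hmono : Monotone εs)
    (hlt : ∀ n, εs n < ε)
    (P : ℝ → Measure Ω) (X : ℕ → Ω → ℕ)
    (hBern : ∀ p ∈ Set.Icc (0:ℝ) 1, IsBernoulliSeq (P p) p X)
    (hεhalf : ε < 1 / 2) :
    (⨆ p ∈ Set.Icc (0:ℝ) α, P p {ω | hitsUpper (P α) X εs ω}) ≤ ENNReal.ofReal ε ∧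
      (⨆ p ∈ Set.Ioc α 1, P p {ω | hitsLower (P α) X εs ω}) ≤ ENNReal.ofReal ε := by
  have hα01 : α ∈ Set.Icc (0 : ℝ) 1 := Set.Ioo_subset_Icc_self hα
  have hhalf : ∀ n, εs n < 1 / 2 := fun n => (hlt n).trans hεhalf
  have hle : ∀ n, εs n ≤ ε := fun n => (hlt n).le
  refine ⟨iSup₂_le fun p hp => ?_, iSup₂_le fun p hp => ?_⟩
  · exact measure_hitsUpper_le (hBern α hα01) (hBern p ⟨hp.1, hp.2.trans hα01.2⟩) hα01 hp
      hmono hhalf hle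
  · exact measure_hitsLower_le (hBern α hα01) (hBern p ⟨hα01.1.trans hp.1.le, hp.2⟩) hα01
      (Set.Ioc_subset_Icc_self hp) hmono hhalf hle

theorem statement_2 {Ω : Type*} [MeasurableSpace Ω]
    (α ε : ℝ) (hα : α ∈ Set.Ioo (0:ℝ) 1) (hε : ε ∈ Set.Ioo (0:ℝ) 1)
    (εs : ℕ → ℝ) (hεs0 : εs 0 = 0) (hmono : Monotone εs)
    (hnonneg : ∀ n, 0 ≤ εs n) (hlt : ∀ n, εs n < ε)
    (hlim : Filter.Tendsto εs Filter.atTop (nhds ε))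
    (P : ℝ → Measure Ω) (X : ℕ → Ω → ℕ)
    (hBern : ∀ p ∈ Set.Icc (0:ℝ) 1, IsBernoulliSeq (P p) p X)
    (hεhalf : ε < 1 / 2)
    (hlog : (fun n => Real.log (εs n - εs (n - 1))) =o[atTop] fun n => (n : ℝ)) :
    (⨆ p ∈ Set.Icc (0:ℝ) α, P p {ω | hitsUpper (P α) X εs ω}) ≤ ENNReal.ofReal ε ∧
      (⨆ p ∈ Set.Ioc α 1, P p {ω | hitsLower (P α) X εs ω}) ≤ ENNReal.ofReal ε :=
  statement_2_general α ε hα εs hmono hlt P X hBern hεhalf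

end SeqMC
end

section
/- For all 0 ≤ p ≤ q ≤ 1, the probability of ever hitting the upper boundary is monotone in the success probability: P_p(τ < ∞, S_τ ≥ U_τ) ≤ P_q(τ < ∞, S_τ ≥ U_τ). -/
/-!
For fixed boundaries, "the walk exits through the upper boundary by time `n`" is an increasing
event of the first `n` increments: raising some `X_i` raises every partial sum, so the walk still
exits upward, at the same time or earlier. The probability of an increasing event of `n`
i.i.d. Bernoulli(`p`) variables is nondecreasing in `p` (induction on `n`, conditioning on the
first variable), and letting `n → ∞` gives the claim.
-/

open MeasureTheory ProbabilityTheory Filter Asymptotics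
open scoped ENNReal

namespace SeqMC

variable {Ω : Type*} [MeasurableSpace Ω]

section Paths

variable {Ω Ω' : Type*} {X : ℕ → Ω → ℕ} {X' : ℕ → Ω' → ℕ} {U L : ℕ → ℤ}
  {ω : Ω} {ω' : Ω'}

lemma hitUpperBy_mono_s4 {m n : ℕ} (hmn : m ≤ n) (h : hitUpperBy X U L m ω) :
    hitUpperBy X U L n ω :=
  let ⟨k, hk1, hkm, hstay, hup⟩ := h
  ⟨k, hk1, hkm.trans hmn, hstay, hup⟩

lemma hitUpperBy_of_S_le {n : ℕ} (hS : ∀ k ≤ n, S X k ω ≤ S X' k ω')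
    (h : hitUpperBy X U L n ω) : hitUpperBy X' U L n ω' := by
  classical
  obtain ⟨k, hk1, hkn, hstay, hup⟩ := h
  have hupk : U k ≤ (S X' k ω' : ℤ) := hup.trans (by exact_mod_cast hS k hkn)
  have hex : ∃ j, 1 ≤ j ∧ ((S X' j ω' : ℤ) ≤ L j ∨ U j ≤ (S X' j ω' : ℤ)) :=
    ⟨k, hk1, Or.inr hupk⟩
  obtain ⟨hj1, hjstop⟩ := Nat.find_spec hex
  have hjk : Nat.find hex ≤ k := Nat.find_min' hex ⟨hk1, Or.inr hupk⟩
  refine ⟨Nat.find hex, hj1, hjk.trans hkn, fun i hi1 hij => ?_, ?_⟩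
  · have := Nat.find_min hex (show i < Nat.find hex by omega)
    push Not at this
    exact this hi1
  · rcases hjk.lt_or_eq with hlt | heq
    · -- before `k` the original walk stays above `L`, hence so does the larger one
      have hL := (hstay _ hj1 (by omega)).1
      have hle : (S X (Nat.find hex) ω : ℤ) ≤ S X' (Nat.find hex) ω' := by
        exact_mod_cast hS _ (by omega)
      exact hjstop.resolve_left (by omega)
    · exact heq ▸ hupk

lemma hitsUpper_iff_exists_hitUpperBy [MeasurableSpace Ω] {Pα : Measure Ω}
    {εs : ℕ → ℝ} :
    hitsUpper Pα X εs ω ↔ ∃ n, hitUpperBy X (Ub Pα X εs) (Lb Pα X εs) n ω := by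
  set T := {k | 1 ≤ k ∧
    ((S X k ω : ℤ) ≤ Lb Pα X εs k ∨ Ub Pα X εs k ≤ (S X k ω : ℤ))}
  have htau : tau Pα X εs ω = sInf T := rfl
  constructor
  · rintro ⟨hτ, hup⟩
    rw [htau] at hτ hup
    exact ⟨sInf T, sInf T, Nat.one_le_iff_ne_zero.2 hτ, le_rfl, fun i hi1 hi => by
      have := Nat.notMem_of_lt_sInf (show i < sInf T by omega)
      simp only [T, Set.mem_ofPred_eq, not_and, not_or, not_le] at this
      exact this hi1, hup⟩
  · rintro ⟨n, k, hk1, -, hstay, hup⟩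
    have hkT : k ∈ T := ⟨hk1, Or.inr hup⟩
    have hτk : sInf T = k := by
      refine (Nat.sInf_le hkT).antisymm (not_lt.1 fun hlt => ?_)
      obtain ⟨hτ1, hτstop⟩ := Nat.sInf_mem ⟨k, hkT⟩
      have := hstay _ hτ1 (by omega)
      omega
    rw [hitsUpper, htau, hτk]
    exact ⟨by omega, hup⟩

end Paths

section BernoulliCube

variable {n : ℕ}

def bernoulliWeight (r : ℝ) (b : Fin n → Bool) : ℝ :=
  ∏ i, if b i then r else 1 - r

lemma bernoulliWeight_nonneg {r : ℝ} (h0 : 0 ≤ r) (h1 : r ≤ 1) (b : Fin n → Bool) :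
    0 ≤ bernoulliWeight r b :=
  Finset.prod_nonneg fun i _ => by split <;> linarith

lemma bernoulliWeight_cons (r : ℝ) (x : Bool) (b : Fin n → Bool) :
    bernoulliWeight r (Fin.cons x b : Fin (n + 1) → Bool) =
      (if x then r else 1 - r) * bernoulliWeight r b := by
  simp [bernoulliWeight, Fin.prod_univ_succ]

lemma sum_mul_bernoulliWeight_succ (χ : (Fin (n + 1) → Bool) → ℝ) (r : ℝ) :
    ∑ b, χ b * bernoulliWeight r b =
      r * ∑ b, χ (Fin.cons true b) * bernoulliWeight r b +
        (1 - r) * ∑ b, χ (Fin.cons false b) * bernoulliWeight r b := by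
  rw [← (Fin.consEquiv fun _ => Bool).sum_comp, Fintype.sum_prod_type, Fintype.sum_bool]
  simp only [Fin.consEquiv, Equiv.coe_fn_mk, bernoulliWeight_cons, if_true, Bool.false_eq_true,
    if_false, Finset.mul_sum]
  congr 1 <;> exact Finset.sum_congr rfl fun b _ => by ring

theorem sum_mul_bernoulliWeight_le_of_monotone {χ : (Fin n → Bool) → ℝ} (hχ : Monotone χ)
    {p q : ℝ} (hp : 0 ≤ p) (hpq : p ≤ q) (hq : q ≤ 1) :
    ∑ b, χ b * bernoulliWeight p b ≤ ∑ b, χ b * bernoulliWeight q b := by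
  induction n with
  | zero => simp [bernoulliWeight]
  | succ n ih =>
    have hcons (x : Bool) : Monotone fun b : Fin n → Bool => χ (Fin.cons x b) :=
      fun b b' h => hχ (Fin.cons_le_cons.2 ⟨le_rfl, h⟩)
    have htrue := ih (hcons true)
    have hfalse := ih (hcons false)
    have hfalse_le_true : ∑ b, χ (Fin.cons false b) * bernoulliWeight q b ≤
        ∑ b, χ (Fin.cons true b) * bernoulliWeight q b :=
      Finset.sum_le_sum fun b _ => mul_le_mul_of_nonneg_right
        (hχ (Fin.cons_le_cons.2 ⟨Bool.false_le _, le_rfl⟩))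
        (bernoulliWeight_nonneg (hp.trans hpq) hq b)
    rw [sum_mul_bernoulliWeight_succ, sum_mul_bernoulliWeight_succ]
    -- `r * A₁ + (1 - r) * A₀` grows with `A₀, A₁` and, as `A₀ ≤ A₁`, with `r`
    nlinarith [mul_le_mul_of_nonneg_left htrue hp,
      mul_le_mul_of_nonneg_left hfalse (sub_nonneg.2 (hpq.trans hq)),
      mul_le_mul_of_nonneg_left hfalse_le_true (sub_nonneg.2 hpq)]

end BernoulliCube

section BernoulliSeq

variable {Ω : Type*} {X : ℕ → Ω → ℕ} {n : ℕ}

/-- The coordinate sequence of the cube, so that `S` and `hitUpperBy` apply to its points. -/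
def cubeCoord (n i : ℕ) (b : Fin n → Bool) : ℕ :=
  if h : i < n then (b ⟨i, h⟩).toNat else 0

lemma monotone_S_cubeCoord (k : ℕ) : Monotone (S (cubeCoord n) k) := fun b b' h =>
  Finset.sum_le_sum fun i _ => by
    unfold cubeCoord
    split
    · exact Bool.toNat_le_toNat (h _)
    · exact le_rfl

def bits (X : ℕ → Ω → ℕ) (n : ℕ) (ω : Ω) : Fin n → Bool :=
  fun i => X i ω = 1

lemma S_cubeCoord_bits (hX : ∀ i ω, X i ω ≤ 1) (ω : Ω) {k : ℕ} (hk : k ≤ n) :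
    S (cubeCoord n) k (bits X n ω) = S X k ω := by
  refine Finset.sum_congr rfl fun i hi => ?_
  have hin : i < n := (Finset.mem_range.1 hi).trans_le hk
  rcases Nat.le_one_iff_eq_zero_or_eq_one.1 (hX i ω) with h | h <;> simp [cubeCoord, bits, hin, h]

lemma bits_preimage_singleton (hX : ∀ i ω, X i ω ≤ 1) (b : Fin n → Bool) :
    bits X n ⁻¹' {b} = ⋂ i ∈ (Finset.univ : Finset (Fin n)), X i ⁻¹' {(b i).toNat} := by
  ext ω
  simp only [Set.mem_preimage, Set.mem_singleton_iff, Set.mem_iInter, Finset.mem_univ,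
    forall_const, funext_iff, bits]
  refine forall_congr' fun i => ?_
  rcases Nat.le_one_iff_eq_zero_or_eq_one.1 (hX i ω) with h | h <;> cases b i <;> simp [h]

namespace IsBernoulliSeq

variable [MeasurableSpace Ω] {P : Measure Ω} {r : ℝ}

lemma measure_preimage_toNat (hB : IsBernoulliSeq P r X) (hr : 0 ≤ r) (i : ℕ) (x : Bool) :
    P (X i ⁻¹' {x.toNat}) = ENNReal.ofReal (if x then r else 1 - r) := by
  have := hB.isProb
  cases x
  · have hcompl : X i ⁻¹' {0} = (X i ⁻¹' {1})ᶜ := by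
      ext ω
      have := hB.bdd i ω
      simp only [Set.mem_preimage, Set.mem_singleton_iff, Set.mem_compl_iff]
      omega
    rw [Bool.toNat_false, hcompl, prob_compl_eq_one_sub (hB.meas i (measurableSet_singleton 1)),
      hB.bern i, if_neg Bool.false_ne_true, ENNReal.ofReal_sub 1 hr, ENNReal.ofReal_one]
  · exact hB.bern i

lemma measure_bits_eq (hB : IsBernoulliSeq P r X) (hr : 0 ≤ r) (hr1 : r ≤ 1)
    (b : Fin n → Bool) :
    P (bits X n ⁻¹' {b}) = ENNReal.ofReal (bernoulliWeight r b) := by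
  rw [bits_preimage_singleton hB.bdd,
    (hB.indep.precomp Fin.val_injective).measure_inter_preimage_eq_mul _
      fun i _ => measurableSet_singleton _, bernoulliWeight,
    ENNReal.ofReal_prod_of_nonneg fun i _ => by split <;> linarith]
  exact Finset.prod_congr rfl fun i _ => hB.measure_preimage_toNat hr i (b i)

lemma measure_bits_preimage (hB : IsBernoulliSeq P r X) (hr : 0 ≤ r) (hr1 : r ≤ 1)
    (D : Finset (Fin n → Bool)) :
    P (bits X n ⁻¹' D) = ENNReal.ofReal (∑ b ∈ D, bernoulliWeight r b) := by
  rw [← sum_measure_preimage_singleton D fun b _ => bits_preimage_singleton hB.bdd b ▸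
      Finset.measurableSet_biInter _ fun i _ => hB.meas i (measurableSet_singleton _),
    ENNReal.ofReal_sum_of_nonneg fun b _ => bernoulliWeight_nonneg hr hr1 b]
  exact Finset.sum_congr rfl fun b _ => hB.measure_bits_eq hr hr1 b

end IsBernoulliSeq

end BernoulliSeq

lemma measure_hitUpperBy_le {Ω : Type*} [MeasurableSpace Ω] {P Q : Measure Ω}
    {X : ℕ → Ω → ℕ} {p q : ℝ} (hBp : IsBernoulliSeq P p X) (hBq : IsBernoulliSeq Q q X)
    (hp : 0 ≤ p) (hpq : p ≤ q) (hq : q ≤ 1) (U L : ℕ → ℤ) (n : ℕ) :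
    P {ω | hitUpperBy X U L n ω} ≤ Q {ω | hitUpperBy X U L n ω} := by
  classical
  let D : Finset (Fin n → Bool) := {b | hitUpperBy (cubeCoord n) U L n b}
  have hevent : {ω | hitUpperBy X U L n ω} = bits X n ⁻¹' D := by
    ext ω
    have hS k (hk : k ≤ n) := S_cubeCoord_bits hBp.bdd ω hk
    simpa [D] using ⟨hitUpperBy_of_S_le fun k hk => (hS k hk).ge,
      hitUpperBy_of_S_le fun k hk => (hS k hk).le⟩
  have hD_mono : Monotone fun b => if b ∈ D then (1 : ℝ) else 0 := by
    intro b b' hbb'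
    by_cases hb : hitUpperBy (cubeCoord n) U L n b
    · have hb' := hitUpperBy_of_S_le (fun k _ => monotone_S_cubeCoord k hbb') hb
      simp [D, hb, hb']
    · simp only [D, Finset.mem_filter, Finset.mem_univ, true_and, hb, if_false]
      split_ifs <;> norm_num
  rw [hevent, hBp.measure_bits_preimage hp (hpq.trans hq),
    hBq.measure_bits_preimage (hp.trans hpq) hq]
  refine ENNReal.ofReal_le_ofReal ?_
  simpa only [ite_mul, one_mul, zero_mul, Finset.sum_ite_mem, Finset.univ_inter] using
    sum_mul_bernoulliWeight_le_of_monotone hD_mono hp hpq hq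

theorem statement_4_general {Ω : Type*} [MeasurableSpace Ω]
    (α : ℝ)
    (εs : ℕ → ℝ)
    (P : ℝ → Measure Ω) (X : ℕ → Ω → ℕ)
    (hBern : ∀ p ∈ Set.Icc (0:ℝ) 1, IsBernoulliSeq (P p) p X)
    (p q : ℝ) (hp : 0 ≤ p) (hpq : p ≤ q) (hq : q ≤ 1) :
    P p {ω | hitsUpper (P α) X εs ω} ≤ P q {ω | hitsUpper (P α) X εs ω} := by
  set A : ℕ → Set Ω := fun n => {ω | hitUpperBy X (Ub (P α) X εs) (Lb (P α) X εs) n ω}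
  have hunion : {ω | hitsUpper (P α) X εs ω} = ⋃ n, A n := by
    ext ω
    simp [A, hitsUpper_iff_exists_hitUpperBy]
  have hA : Monotone A := fun m n hmn ω => hitUpperBy_mono_s4 hmn
  rw [hunion, hA.measure_iUnion, hA.measure_iUnion]
  exact iSup_mono fun n => measure_hitUpperBy_le (hBern p ⟨hp, hpq.trans hq⟩)
    (hBern q ⟨hp.trans hpq, hq⟩) hp hpq hq _ _ n

theorem statement_4 {Ω : Type*} [MeasurableSpace Ω]
    (α ε : ℝ) (hα : α ∈ Set.Ioo (0:ℝ) 1) (hε : ε ∈ Set.Ioo (0:ℝ) 1)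
    (εs : ℕ → ℝ) (hεs0 : εs 0 = 0) (hmono : Monotone εs)
    (hnonneg : ∀ n, 0 ≤ εs n) (hlt : ∀ n, εs n < ε)
    (hlim : Filter.Tendsto εs Filter.atTop (nhds ε))
    (P : ℝ → Measure Ω) (X : ℕ → Ω → ℕ)
    (hBern : ∀ p ∈ Set.Icc (0:ℝ) 1, IsBernoulliSeq (P p) p X)
    (p q : ℝ) (hp : 0 ≤ p) (hpq : p ≤ q) (hq : q ≤ 1) :
    P p {ω | hitsUpper (P α) X εs ω} ≤ P q {ω | hitsUpper (P α) X εs ω} :=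
  statement_4_general α εs P X hBern p q hp hpq hq

end SeqMC
end
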